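/- arXiv:1912.11194 — 3 statements merged into one kernel-verified Lean document; each statement's English description precedes it below -/
import Mathlib

section
/- Let ℓ₁,…,ℓₙ be real numbers and 1 ≤ K ≤ n. Then max over p with Σᵢ pᵢ = 1 and 0 ≤ pᵢ ≤ 1/K of Σᵢ pᵢ ℓᵢ equals (1/K)·Σ_{i=1}^{K} ℓ_{[i]}, where ℓ_{[i]} denotes the i-th largest value among ℓ₁,…,ℓₙ. -/
/-- The max of `∑ pᵢ ℓᵢ` subject to `∑ pᵢ = 1`, `0 ≤ pᵢ ≤ 1/K` equals the average of the
`K` largest values among the `ℓᵢ`. -/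
theorem dro_topK_value (n K : ℕ) (hK : 1 ≤ K) (hKn : K ≤ n) (ℓ : Fin n → ℝ) :
    IsGreatest {x : ℝ | ∃ p : Fin n → ℝ, (∀ i, 0 ≤ p i ∧ p i ≤ 1 / K) ∧ (∑ i, p i) = 1 ∧
        x = ∑ i, p i * ℓ i}
      ((1 / K) * ((List.insertionSort (· ≥ ·) (List.ofFn ℓ)).take K).sum) := by
  have hK0 : (0:ℝ) < K := by exact_mod_cast hK
  -- sorting permutation: g = ℓ ∘ σ is antitone
  set σ : Equiv.Perm (Fin n) := Fin.revPerm.trans (Tuple.sort ℓ) with hσ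
  set g : Fin n → ℝ := ℓ ∘ σ with hg
  have hanti : Antitone g := by
    intro i j hij
    have := Tuple.monotone_sort ℓ (Fin.rev_le_rev.mpr hij)
    simpa [hg, hσ] using this
  -- the sorted list is ofFn g
  have hlist : List.insertionSort (· ≥ ·) (List.ofFn ℓ) = List.ofFn g := by
    refine List.Perm.eq_of_pairwise' (r := (· ≥ ·)) ?_ ?_
      ((List.perm_insertionSort _ _).trans (σ.ofFn_comp_perm ℓ).symm)
    · exact List.pairwise_insertionSort _ _
    · rw [List.pairwise_ofFn]
      intro i j hij
      exact hanti hij.le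
  rw [hlist]
  have htake : ((List.ofFn g).take K).sum
      = ∑ j ∈ Finset.univ.filter fun j : Fin n => j.val < K, g j :=
    List.sum_take_ofFn g K
  have hconst : ∀ c : ℝ, (∑ j : Fin n, if (j : ℕ) < K then c else 0) = K * c := by
    intro c
    rw [Fin.sum_univ_eq_sum_range (fun i => if i < K then c else 0), ← Finset.sum_filter]
    have he : (Finset.range n).filter (· < K) = Finset.range K := by
      ext i; simp; omega
    rw [he, Finset.sum_const, Finset.card_range, nsmul_eq_mul]
  constructor
  · -- membership: p = (1/K) on top-K indices
    refine ⟨fun i => if (σ.symm i : ℕ) < K then (1/K : ℝ) else 0, ?_, ?_, ?_⟩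
    · intro i
      refine ⟨?_, ?_⟩ <;> dsimp only
      · split <;> positivity
      · split
        · exact le_refl _
        · positivity
    · rw [← Equiv.sum_comp σ]
      simp only [Equiv.symm_apply_apply]
      rw [hconst]
      field_simp
    · rw [← Equiv.sum_comp σ (fun i => (if (σ.symm i : ℕ) < K then (1/K:ℝ) else 0) * ℓ i)]
      simp only [Equiv.symm_apply_apply]
      rw [htake, Finset.mul_sum, Finset.sum_filter]
      apply Finset.sum_congr rfl
      intro j _
      by_cases hj : (j : ℕ) < K <;> simp [hj, hg]
  · -- upper bound
    rintro x ⟨p, hp, hsum, rfl⟩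
    have hKn' : K - 1 < n := lt_of_lt_of_le (Nat.sub_lt hK Nat.one_pos) hKn
    set t : ℝ := g ⟨K - 1, hKn'⟩ with ht
    have key : ∀ i, p i * ℓ i ≤ (1/K) * max (ℓ i - t) 0 + p i * t := by
      intro i
      have h1 : p i * ℓ i = p i * (ℓ i - t) + p i * t := by ring
      rw [h1]
      gcongr ?_ + _
      calc p i * (ℓ i - t) ≤ p i * max (ℓ i - t) 0 :=
            mul_le_mul_of_nonneg_left (le_max_left _ _) (hp i).1
        _ ≤ (1/K) * max (ℓ i - t) 0 :=
            mul_le_mul_of_nonneg_right (hp i).2 (le_max_right _ _)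
    calc ∑ i, p i * ℓ i ≤ ∑ i, ((1/K) * max (ℓ i - t) 0 + p i * t) :=
          Finset.sum_le_sum fun i _ => key i
      _ = (1/K) * (∑ i, max (ℓ i - t) 0) + t := by
          rw [Finset.sum_add_distrib, ← Finset.mul_sum, ← Finset.sum_mul, hsum, one_mul]
      _ = (1/K) * (∑ j : Fin n, if (j : ℕ) < K then g j - t else 0) + t := by
          congr 1
          rw [← Equiv.sum_comp σ (fun i => max (ℓ i - t) 0)]
          congr 1
          apply Finset.sum_congr rfl
          intro j _
          by_cases hj : (j : ℕ) < K
          · have htg : t ≤ g j := hanti (by show (j:ℕ) ≤ K - 1; omega)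
            simp only [hj, if_true, hg, Function.comp_apply] at htg ⊢
            exact max_eq_left (by linarith)
          · have htg : g j ≤ t := hanti (by rw [Fin.le_def]; show K - 1 ≤ (j:ℕ); omega)
            simp only [hj, if_false, hg, Function.comp_apply] at htg ⊢
            exact max_eq_right (by linarith)
      _ = (1/K) * ((List.ofFn g).take K).sum := by
          rw [htake]
          have h1 : (∑ j : Fin n, if (j : ℕ) < K then g j - t else 0)
              = (∑ j : Fin n, if (j : ℕ) < K then g j else 0)
                - (∑ j : Fin n, if (j : ℕ) < K then t else 0) := by
            rw [← Finset.sum_sub_distrib]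
            apply Finset.sum_congr rfl
            intro j _
            by_cases hj : (j : ℕ) < K <;> simp [hj]
          rw [h1, hconst, Finset.sum_filter]
          field_simp
          ring
end

section
/- Let ℓ₁,…,ℓₙ be real numbers with empirical mean μ = (1/n)Σᵢℓᵢ and empirical variance Varₙ(ℓ) = (1/n)Σᵢ(ℓᵢ − μ)². Let ρ > 0 and U_φ = {p ∈ Δ : (1/2)Σᵢ (n pᵢ − 1)²/n ≤ ρ/n}. If Varₙ(ℓ) > 0 and the maximizer of Σᵢ pᵢ ℓᵢ over U_φ lies in the interior of the simplex (all pᵢ > 0), then sup_{p ∈ U_φ} Σᵢ pᵢ ℓᵢ = μ + sqrt(2ρ·Varₙ(ℓ)/n). -/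
set_option maxHeartbeats 1000000


/-- Variance-regularization identity: over the χ²-divergence ball around the uniform
distribution, if the maximizer is interior and the empirical variance is positive, then
`sup_{p ∈ U_φ} ∑ pᵢ ℓᵢ = μ + sqrt(2 ρ Varₙ(ℓ) / n)`. -/
theorem dro_variance_regularization (n : ℕ) (hn : 0 < n) (ℓ : Fin n → ℝ) (ρ : ℝ) (hρ : 0 < ρ) :
    let μ : ℝ := (1 / n) * ∑ i, ℓ i
    let V : ℝ := (1 / n) * ∑ i, (ℓ i - μ) ^ 2
    let U : Set (Fin n → ℝ) := {p | (∀ i, 0 ≤ p i) ∧ (∑ i, p i) = 1 ∧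
      (1 / 2) * ∑ i, (n * p i - 1) ^ 2 / n ≤ ρ / n}
    0 < V →
    (∃ pstar ∈ U, (∀ i, 0 < pstar i) ∧ ∀ p ∈ U, ∑ i, p i * ℓ i ≤ ∑ i, pstar i * ℓ i) →
    sSup {x : ℝ | ∃ p ∈ U, x = ∑ i, p i * ℓ i} = μ + Real.sqrt (2 * ρ * V / n) := by
  intro μ V U hV hex
  obtain ⟨pstar, hpU, hpos, hmax⟩ := hex
  have hn' : (0:ℝ) < n := by exact_mod_cast hn
  have hμ : μ = (1 / n) * ∑ i, ℓ i := rfl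
  have hVdef : V = (1 / n) * ∑ i, (ℓ i - μ) ^ 2 := rfl
  have hUdef : U = {p : Fin n → ℝ | (∀ i, 0 ≤ p i) ∧ (∑ i, p i) = 1 ∧
      (1 / 2) * ∑ i, ((n:ℝ) * p i - 1) ^ 2 / n ≤ ρ / n} := rfl
  set B := μ + Real.sqrt (2 * ρ * V / n) with hBdef
  clear_value B
  clear_value μ V U
  subst hUdef
  -- basic sum identities
  have hsumℓ : ∑ i, ℓ i = n * μ := by rw [hμ]; field_simp
  have hsum0 : ∑ i, (ℓ i - μ) = 0 := by
    rw [Finset.sum_sub_distrib, hsumℓ, Finset.sum_const, Finset.card_univ, Fintype.card_fin,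
      nsmul_eq_mul]
    ring
  have hnV : ∑ i, (ℓ i - μ)^2 = n * V := by rw [hVdef]; field_simp
  -- key centering identity: for any p summing to 1
  have key : ∀ p : Fin n → ℝ, (∑ i, p i) = 1 →
      ∑ i, (p i - 1/(n:ℝ)) * (ℓ i - μ) = ∑ i, p i * ℓ i - μ := by
    intro p hp1
    have expand : ∀ i ∈ Finset.univ, (p i - 1/(n:ℝ)) * (ℓ i - μ)
        = p i * ℓ i - μ * p i - (1/(n:ℝ)) * ℓ i + μ/n := by intro i _; ring
    rw [Finset.sum_congr rfl expand]
    rw [Finset.sum_add_distrib, Finset.sum_sub_distrib, Finset.sum_sub_distrib,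
      ← Finset.mul_sum, ← Finset.mul_sum, hp1, hsumℓ, Finset.sum_const,
      Finset.card_univ, Fintype.card_fin, nsmul_eq_mul]
    field_simp
    ring
  -- divergence constraint rewrite
  have hdiv : ∀ p : Fin n → ℝ,
      (1 / 2) * ∑ i, ((n:ℝ) * p i - 1) ^ 2 / n ≤ ρ / n ↔
      ∑ i, ((n:ℝ) * p i - 1) ^ 2 ≤ 2 * ρ := by
    intro p
    rw [← Finset.sum_div, mul_div_assoc', div_le_div_iff_of_pos_right hn']
    constructor <;> intro h <;> linarith
  -- Step 1: upper bound
  have hub : ∀ p, p ∈ {p : Fin n → ℝ | (∀ i, 0 ≤ p i) ∧ (∑ i, p i) = 1 ∧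
      (1 / 2) * ∑ i, ((n:ℝ) * p i - 1) ^ 2 / n ≤ ρ / n} → ∑ i, p i * ℓ i ≤ B := by
    intro p hp
    obtain ⟨hp0, hp1, hp2⟩ := hp
    rw [hdiv] at hp2
    have ha : ∑ i, (p i - 1/(n:ℝ))^2 ≤ 2 * ρ / (n:ℝ)^2 := by
      have : ∑ i, ((n:ℝ) * p i - 1) ^ 2 = (n:ℝ)^2 * ∑ i, (p i - 1/(n:ℝ))^2 := by
        rw [Finset.mul_sum]
        refine Finset.sum_congr rfl fun i _ => ?_
        field_simp
      rw [this] at hp2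
      rw [le_div_iff₀ (by positivity)]
      linarith
    have cs := Finset.sum_mul_sq_le_sq_mul_sq Finset.univ
      (fun i => p i - 1/(n:ℝ)) (fun i => ℓ i - μ)
    have hb : (∑ i, (p i - 1/(n:ℝ)) * (ℓ i - μ))^2 ≤ 2 * ρ * V / n := by
      calc (∑ i, (p i - 1/(n:ℝ)) * (ℓ i - μ))^2
          ≤ (∑ i, (p i - 1/(n:ℝ))^2) * ∑ i, (ℓ i - μ)^2 := cs
        _ ≤ (2 * ρ / (n:ℝ)^2) * ((n:ℝ) * V) := by
            rw [hnV]
            have hVn : (0:ℝ) ≤ (n:ℝ) * V := by positivity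
            apply mul_le_mul ha le_rfl hVn (by positivity)
        _ = 2 * ρ * V / n := by field_simp
    have : ∑ i, (p i - 1/(n:ℝ)) * (ℓ i - μ) ≤ Real.sqrt (2 * ρ * V / n) := by
      calc ∑ i, (p i - 1/(n:ℝ)) * (ℓ i - μ)
          ≤ |∑ i, (p i - 1/(n:ℝ)) * (ℓ i - μ)| := le_abs_self _
        _ = Real.sqrt ((∑ i, (p i - 1/(n:ℝ)) * (ℓ i - μ))^2) := (Real.sqrt_sq_eq_abs _).symm
        _ ≤ Real.sqrt (2 * ρ * V / n) := Real.sqrt_le_sqrt hb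
    rw [key p hp1] at this
    rw [hBdef]; linarith
  -- Step 2: the candidate q
  set c : ℝ := Real.sqrt (2 * ρ / ((n:ℝ)^3 * V)) with hcdef
  have hc0 : 0 ≤ c := Real.sqrt_nonneg _
  have hc2 : c^2 = 2 * ρ / ((n:ℝ)^3 * V) := Real.sq_sqrt (by positivity)
  set q : Fin n → ℝ := fun i => 1/(n:ℝ) + c * (ℓ i - μ) with hqdef
  have hqsum : ∑ i, q i = 1 := by
    rw [hqdef]
    simp only
    rw [Finset.sum_add_distrib, ← Finset.mul_sum, hsum0, Finset.sum_const,
      Finset.card_univ, Fintype.card_fin]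
    rw [nsmul_eq_mul, mul_zero, add_zero]; field_simp
  have hsqrtB : Real.sqrt (2 * ρ * V / n) = c * ((n:ℝ) * V) := by
    have h1 : 2 * ρ * V / (n:ℝ) = (c * ((n:ℝ) * V))^2 := by
      rw [mul_pow, hc2]
      field_simp
    rw [h1, Real.sqrt_sq (by positivity)]
  have hqval : ∑ i, q i * ℓ i = B := by
    have h1 : ∑ i, (q i - 1/(n:ℝ)) * (ℓ i - μ) = ∑ i, q i * ℓ i - μ := key q hqsum
    have h2 : ∑ i, (q i - 1/(n:ℝ)) * (ℓ i - μ) = c * ((n:ℝ) * V) := by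
      rw [← hnV, Finset.mul_sum]
      refine Finset.sum_congr rfl fun i _ => ?_
      rw [hqdef]; ring
    rw [hBdef, hsqrtB]
    linarith [h1, h2]
  have hqdiv : ∑ i, ((n:ℝ) * q i - 1) ^ 2 = 2 * ρ := by
    have : ∀ i ∈ Finset.univ, ((n:ℝ) * q i - 1)^2 = (n:ℝ)^2 * c^2 * (ℓ i - μ)^2 := by
      intro i _
      have h : (n:ℝ) * q i - 1 = (n:ℝ) * c * (ℓ i - μ) := by
        rw [hqdef]; field_simp; ring
      rw [h]; ring
    rw [Finset.sum_congr rfl this, ← Finset.mul_sum, hnV, hc2]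
    field_simp
  -- the mixing parameter t
  have hne : Nonempty (Fin n) := ⟨⟨0, hn⟩⟩
  obtain ⟨i₀⟩ := hne
  set m : ℝ := Finset.univ.inf' (Finset.univ_nonempty_iff.mpr ⟨i₀⟩) pstar with hmdef
  have hm0 : 0 < m := by
    rw [hmdef, Finset.lt_inf'_iff]
    exact fun i _ => hpos i
  have hmle : ∀ i, m ≤ pstar i := fun i =>
    Finset.inf'_le _ (Finset.mem_univ i)
  set M : ℝ := (∑ i, |q i|) + 1 with hMdef
  have hM0 : 0 < M := by
    rw [hMdef]
    have : (0:ℝ) ≤ ∑ i, |q i| := Finset.sum_nonneg fun i _ => abs_nonneg _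
    linarith
  have hqge : ∀ i, -M ≤ q i := by
    intro i
    have h1 : |q i| ≤ ∑ j, |q j| :=
      Finset.single_le_sum (fun j _ => abs_nonneg (q j)) (Finset.mem_univ i)
    have := neg_abs_le (q i)
    rw [hMdef]
    linarith
  set t : ℝ := m / (m + M) with htdef
  have ht0 : 0 < t := by rw [htdef]; positivity
  have ht1 : t ≤ 1 := by
    rw [htdef, div_le_one (by linarith)]
    linarith
  have ht1' : 1 - t = M / (m + M) := by
    rw [htdef]
    field_simp
    ring
  have hmM : m + M ≠ 0 := by positivity
  have h4 : (1 - t) * m + t * (-M) = 0 := by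
    rw [ht1', htdef]
    field_simp
    ring
  clear_value c q m M t
  set pt : Fin n → ℝ := fun i => (1 - t) * pstar i + t * q i with hptdef
  clear_value pt
  obtain ⟨hps0, hps1, hps2⟩ := hpU
  have hptU : pt ∈ {p : Fin n → ℝ | (∀ i, 0 ≤ p i) ∧ (∑ i, p i) = 1 ∧
      (1 / 2) * ∑ i, ((n:ℝ) * p i - 1) ^ 2 / n ≤ ρ / n} := by
    refine ⟨?_, ?_, ?_⟩
    · intro i
      simp only [hptdef]
      have h1 := hmle i
      have h2 := hqge i
      have h3 : (1 - t) * pstar i + t * q i ≥ (1 - t) * m + t * (-M) := by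
        have hnt : 0 ≤ 1 - t := by linarith
        nlinarith
      linarith
    · simp only [hptdef]
      rw [Finset.sum_add_distrib, ← Finset.mul_sum, ← Finset.mul_sum, hps1, hqsum]
      ring
    · rw [hdiv]
      have hconv : ∀ i ∈ Finset.univ, ((n:ℝ) * pt i - 1)^2 ≤
          (1 - t) * ((n:ℝ) * pstar i - 1)^2 + t * ((n:ℝ) * q i - 1)^2 := by
        intro i _
        simp only [hptdef]
        have hnt : 0 ≤ 1 - t := by linarith
        nlinarith [sq_nonneg ((n:ℝ) * pstar i - (n:ℝ) * q i), mul_nonneg hnt ht0.le,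
          sq_nonneg ((n:ℝ) * pstar i - 1 - ((n:ℝ) * q i - 1))]
      calc ∑ i, ((n:ℝ) * pt i - 1)^2
          ≤ ∑ i, ((1 - t) * ((n:ℝ) * pstar i - 1)^2 + t * ((n:ℝ) * q i - 1)^2) :=
            Finset.sum_le_sum hconv
        _ = (1 - t) * ∑ i, ((n:ℝ) * pstar i - 1)^2 + t * ∑ i, ((n:ℝ) * q i - 1)^2 := by
            rw [Finset.sum_add_distrib, ← Finset.mul_sum, ← Finset.mul_sum]
        _ ≤ (1 - t) * (2 * ρ) + t * (2 * ρ) := by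
            rw [hqdiv]
            have hps2' := (hdiv pstar).mp hps2
            have hnt : 0 ≤ 1 - t := by linarith
            nlinarith
        _ = 2 * ρ := by ring
  -- value of pt
  have hptval : ∑ i, pt i * ℓ i = (1 - t) * (∑ i, pstar i * ℓ i) + t * B := by
    rw [hptdef, ← hqval]
    simp only
    rw [Finset.mul_sum, Finset.mul_sum, ← Finset.sum_add_distrib]
    refine Finset.sum_congr rfl fun i _ => ?_
    ring
  have hBle : B ≤ ∑ i, pstar i * ℓ i := by
    have h1 := hmax pt hptU
    rw [hptval] at h1
    nlinarith
  have hstar : ∑ i, pstar i * ℓ i = B :=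
    le_antisymm (hub pstar ⟨hps0, hps1, hps2⟩) hBle
  -- conclude about sSup
  apply le_antisymm
  · apply csSup_le
    · exact ⟨∑ i, pstar i * ℓ i, pstar, ⟨hps0, hps1, hps2⟩, rfl⟩
    · rintro x ⟨p, hp, rfl⟩
      exact hub p hp
  · rw [← hstar]
    apply le_csSup
    · exact ⟨B, by rintro x ⟨p, hp, rfl⟩; exact hub p hp⟩
    · exact ⟨pstar, ⟨hps0, hps1, hps2⟩, rfl⟩
end

section
/- Let P be a finite nonempty set, S_j ∈ ℝ for j ∈ P, α > 0, λ ∈ ℝ. Augment P with one extra index whose loss is zero, and consider softmax weights with temperature 1/α over losses l_j = α(λ + m − S_j) (assumed positive) together with the zero loss, where m is such that λ + m = c⁺. Then the resulting weight of index j is 1/(exp(α(S_j − c⁺)) + Σ_{k∈P} exp(α(S_j − S_k))), which with c⁺ = λ coincides with the multi-similarity loss positive-pair weight. -/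
/-- Adding a dummy zero-loss index to the softmax over positive-pair losses
`l_j = α(c⁺ − S_j)` yields the weight `1/(exp(α(S_j − c⁺)) + ∑_k exp(α(S_j − S_k)))`,
which with `c⁺ = λ` is the multi-similarity positive-pair weight. -/
theorem ms_positive_weight_from_dro (ι : Type*) [Fintype ι] [Nonempty ι]
    (S : ι → ℝ) (α lam m c : ℝ) (hα : 0 < α) (hc : c = lam + m)
    (hpos : ∀ j, 0 < α * (c - S j)) :
    (∀ j : ι, Real.exp (α * (c - S j)) / (Real.exp 0 + ∑ k, Real.exp (α * (c - S k)))
      = 1 / (Real.exp (α * (S j - c)) + ∑ k, Real.exp (α * (S j - S k)))) ∧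
    (c = lam → ∀ j : ι,
      1 / (Real.exp (α * (S j - c)) + ∑ k, Real.exp (α * (S j - S k)))
        = Real.exp (-α * (S j - lam)) / (1 + ∑ k, Real.exp (-α * (S k - lam)))) := by
  have hsum : ∀ (f : ι → ℝ), 0 < ∑ k, Real.exp (f k) := fun f =>
    Finset.sum_pos (fun k _ => Real.exp_pos _) Finset.univ_nonempty
  constructor
  · intro j
    rw [div_eq_div_iff (by positivity) (by positivity)]
    rw [mul_add, Finset.mul_sum, one_mul]
    rw [← Real.exp_add]
    ring_nf
    congr 1
    apply Finset.sum_congr rfl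
    intro k _
    rw [← Real.exp_add]
    ring_nf
  · intro hcl j
    subst hcl
    rw [div_eq_div_iff (add_pos (Real.exp_pos _) (hsum _)).ne' (add_pos one_pos (hsum _)).ne']
    rw [one_mul, mul_add, Finset.mul_sum, ← Real.exp_add]
    norm_num
    congr 1
    funext k
    rw [← Real.exp_add]
    ring_nf
end
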